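/- Let Φ(x₁,x₂,x₃,x₄) = 2x₁x₃ − 3x₁x₄ − 3x₂x₃ + 6x₂x₄ and let l₃ be the 2-plane in ℝ⁴ spanned by v = (1, 101/100, 401/200, 2503/1500) and w = (0, 1, 5/2, 5/2). Then Φ does not vanish at any nonzero point of l₃; in particular, the projective line corresponding to l₃ does not intersect the quadric {Φ = 0} in ℝP³. -/
import Mathlib


/-- The quadratic form `Φ(x₁,x₂,x₃,x₄) = 2x₁x₃ − 3x₁x₄ − 3x₂x₃ + 6x₂x₄`. -/
def Phi (x : Fin 4 → ℝ) : ℝ :=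
  2 * x 0 * x 2 - 3 * x 0 * x 3 - 3 * x 1 * x 2 + 6 * x 1 * x 3

/-- `Φ` does not vanish at any nonzero point of the 2-plane `l₃`; hence the
projective line corresponding to `l₃` misses the quadric `{Φ = 0}` in `ℝP³`. -/
theorem Phi_nonzero_on_l3 :
    ∀ v ∈ Submodule.span ℝ
        ({![1, 101/100, 401/200, 2503/1500], ![0, 1, 5/2, 5/2]} :
          Set (Fin 4 → ℝ)),
      v ≠ 0 → Phi v ≠ 0 := by
  intro v hv hne
  rw [Submodule.mem_span_pair] at hv
  obtain ⟨m, n, rfl⟩ := hv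
  intro h
  simp only [Phi, Pi.add_apply, Pi.smul_apply, Matrix.cons_val_zero, Matrix.cons_val_one,
    Matrix.head_cons, Matrix.cons_val_two, Matrix.tail_cons, Matrix.cons_val_three,
    smul_eq_mul] at h
  have hn : n = 0 := by
    nlinarith [sq_nonneg (304097 * m + 453600 * n), sq_nonneg n, sq_nonneg m]
  subst hn
  have hm : m = 0 := by nlinarith [sq_nonneg m]
  apply hne
  subst hm
  simp
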